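/- Let K = F_{p^m}, F = F_{p^a} with a | m, and suppose χ : K → F is F-linear and nonzero, f : K → K is F-linear and nonzero with f² = 0, χ∘f = 0, and ker(χ) = ker(f). If p is odd, then the group I_{χ,f} = {(x, 1-χ(x)f) : x ∈ K} is elementary abelian of order p^m (every nonidentity element has order p and the group is abelian). -/

import Mathlib

/-!
Since `ker χ ⊆ ker f`, the map `f` factors through `χ`, so `χ x • f y = χ y • f x`; this identity
is exactly what makes `T_x : z ↦ x + z - χ x • f z` commute with `T_y`. Since `f ∘ f = 0`,
iterating gives `T_x^[k] z = z + k • (x - χ x • f z) - (k choose 2) • (χ x • f x)`. For an odd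
prime `p` both `p` and `p choose 2` vanish in characteristic `p`, so `T_x^[p] = id`. Conversely,
if `T_x^[k] = id` with `k` invertible, comparing the values at `z` and at `0` gives
`χ x • f = 0`, hence `χ x = 0` because `ker f ⊆ ker χ`, and then `k • x = 0`. Finally
`T_x 0 = x`, so there are as many `T_x` as elements of `K`.
-/

section CommRing

variable {F K : Type*} [CommRing F] [AddCommGroup K] [Module F K]

def shearMap (χ : K →ₗ[F] F) (f : K →ₗ[F] K) (x : K) : K → K :=
  fun z => x + (z - χ x • f z)

variable {χ : K →ₗ[F] F} {f : K →ₗ[F] K}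

theorem smul_apply_comm_of_ker_le (h : LinearMap.ker χ ≤ LinearMap.ker f) (x y : K) :
    χ x • f y = χ y • f x := by
  have hzero : f (χ x • y - χ y • x) = 0 :=
    LinearMap.mem_ker.mp <| h <| LinearMap.mem_ker.mpr <| by
      simp only [map_sub, map_smul, smul_eq_mul, mul_comm, sub_self]
  rwa [map_sub, map_smul, map_smul, sub_eq_zero] at hzero

theorem shearMap_comp_comm (h : LinearMap.ker χ ≤ LinearMap.ker f) (x y : K) :
    shearMap χ f x ∘ shearMap χ f y = shearMap χ f y ∘ shearMap χ f x := by
  funext z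
  have hxy := smul_apply_comm_of_ker_le h x y
  simp only [Function.comp_apply, shearMap, map_add, map_sub, map_smul, smul_sub, smul_add,
    smul_smul]
  rw [mul_comm (χ x) (χ y), hxy]
  abel

theorem shearMap_iterate_apply (hf2 : ∀ z, f (f z) = 0) (x : K) (k : ℕ) (z : K) :
    (shearMap χ f x)^[k] z = z + k • (x - χ x • f z) - k.choose 2 • (χ x • f x) := by
  induction k with
  | zero => simp
  | succ k ih =>
    rw [Function.iterate_succ_apply', ih, Nat.choose_succ_succ', Nat.choose_one_right]
    simp only [shearMap, map_add, map_sub, map_nsmul, map_smul, hf2, smul_zero, sub_zero,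
      smul_add, smul_sub, smul_comm (χ x) k]
    simp only [succ_nsmul, add_nsmul]
    abel

theorem shearMap_iterate_eq_id (hf2 : ∀ z, f (f z) = 0) (x : K) {n : ℕ} (hn : (n : F) = 0)
    (hn2 : (n.choose 2 : F) = 0) : (shearMap χ f x)^[n] = id := by
  funext z
  rw [shearMap_iterate_apply hf2, ← Nat.cast_smul_eq_nsmul F, ← Nat.cast_smul_eq_nsmul F, hn, hn2]
  simp

theorem shearMap_injective : Function.Injective (shearMap χ f) := fun x y h => by
  simpa [shearMap] using congrFun h 0

theorem card_setOf_eq_shearMap : Nat.card {g : K → K | ∃ x, g = shearMap χ f x} = Nat.card K := by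
  have hrange : {g : K → K | ∃ x, g = shearMap χ f x} = Set.range (shearMap χ f) :=
    Set.ext fun _ => exists_congr fun _ => eq_comm
  rw [hrange, Nat.card_range_of_injective shearMap_injective]

end CommRing

section Field

variable {F K : Type*} [Field F] [AddCommGroup K] [Module F K] {χ : K →ₗ[F] F} {f : K →ₗ[F] K}

theorem shearMap_iterate_ne_id (hf2 : ∀ z, f (f z) = 0) (h : LinearMap.ker f ≤ LinearMap.ker χ)
    {k : ℕ} (hk : (k : F) ≠ 0) {x : K} (hx : x ≠ 0) : (shearMap χ f x)^[k] ≠ id := by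
  intro hid
  have hfix (z : K) : k • (x - χ x • f z) = k.choose 2 • (χ x • f x) := by
    have := congrFun hid z
    rwa [shearMap_iterate_apply hf2, id, add_sub_assoc, add_eq_left, sub_eq_zero] at this
  have hkfx : (k : F) • (χ x • f x) = 0 := by
    have := (hfix x).trans (hfix 0).symm
    rwa [map_zero, smul_zero, sub_zero, smul_sub, sub_eq_self, ← Nat.cast_smul_eq_nsmul F] at this
  have hχx : χ x = 0 := by
    rcases smul_eq_zero.mp ((smul_eq_zero.mp hkfx).resolve_left hk) with hχx | hfx
    · exact hχx
    · exact LinearMap.mem_ker.mp (h (LinearMap.mem_ker.mpr hfx))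
  have hkx : (k : F) • x = 0 := by
    simpa [hχx, Nat.cast_smul_eq_nsmul] using hfix 0
  exact hx ((smul_eq_zero.mp hkx).resolve_left hk)

end Field

theorem stmt17_general (p m : ℕ) (hp : p.Prime) (hodd : Odd p)
    (F K : Type*) [Field F] [Field K] [Algebra F K] [Fintype K]
    (hK : Fintype.card K = p ^ m)
    (f : K →ₗ[F] K) (hf2 : f ∘ₗ f = 0)
    (χ : K →ₗ[F] F)
    (hker : ∀ x : K, χ x = 0 ↔ f x = 0) :
    (∀ x y : K,
      (fun z : K => x + (z - χ x • f z)) ∘ (fun z : K => y + (z - χ y • f z)) =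
        (fun z : K => y + (z - χ y • f z)) ∘ (fun z : K => x + (z - χ x • f z))) ∧
    (∀ x : K, x ≠ 0 →
      (fun z : K => x + (z - χ x • f z))^[p] = id ∧
      ∀ k : ℕ, 0 < k → k < p → (fun z : K => x + (z - χ x • f z))^[k] ≠ id) ∧
    Nat.card {g : K → K | ∃ x : K, g = fun z : K => x + (z - χ x • f z)} = p ^ m := by
  have := Fact.mk hp
  have : CharP K p := charP_of_card_eq_prime_pow hK
  have : CharP F p := (Algebra.charP_iff F K p).mpr inferInstance
  have hff (z : K) : f (f z) = 0 := LinearMap.congr_fun hf2 z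
  have hker' : LinearMap.ker χ = LinearMap.ker f :=
    Submodule.ext fun x => by simp only [LinearMap.mem_ker, hker x]
  have hp2 : 2 < p :=
    hp.two_le.lt_of_ne' (by rintro rfl; exact Nat.not_odd_iff_even.mpr even_two hodd)
  refine ⟨shearMap_comp_comm hker'.le, fun x hx => ⟨?_, fun k hk0 hkp => ?_⟩, ?_⟩
  · refine shearMap_iterate_eq_id hff x (CharP.cast_eq_zero F p) ?_
    exact (CharP.cast_eq_zero_iff F p _).mpr (hp.dvd_choose_self two_ne_zero hp2)
  · refine shearMap_iterate_ne_id hff hker'.ge ?_ hx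
    exact fun hk => absurd (Nat.le_of_dvd hk0 ((CharP.cast_eq_zero_iff F p k).mp hk)) (by omega)
  · exact card_setOf_eq_shearMap.trans (by rw [Nat.card_eq_fintype_card, hK])

/-- Suppose `χ : K → F` is `F`-linear and nonzero, `f : K → K` is
`F`-linear and nonzero with `f² = 0` and `χ ∘ f = 0`, and `ker χ = ker f`. If `p` is odd,
then the group `I_{χ,f} = {(x, 1-χ(x)f) : x ∈ K}` (whose element determined by `x` is
the permutation `z ↦ x + z - χ(x)·f(z)` of `K`) is elementary abelian of order `p^m`:
it is abelian, every nonidentity element has order exactly `p`, and it has `p^m`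
elements. -/
theorem stmt17 (p m a : ℕ) (hp : p.Prime) (hodd : Odd p) (ham : a ∣ m)
    (F K : Type*) [Field F] [Field K] [Algebra F K] [Fintype F] [Fintype K]
    (hF : Fintype.card F = p ^ a) (hK : Fintype.card K = p ^ m)
    (f : K →ₗ[F] K) (hf : f ≠ 0) (hf2 : f ∘ₗ f = 0)
    (χ : K →ₗ[F] F) (hχ : χ ≠ 0) (hχf : ∀ x : K, χ (f x) = 0)
    (hker : ∀ x : K, χ x = 0 ↔ f x = 0) :
    (∀ x y : K,
      (fun z : K => x + (z - χ x • f z)) ∘ (fun z : K => y + (z - χ y • f z)) =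
        (fun z : K => y + (z - χ y • f z)) ∘ (fun z : K => x + (z - χ x • f z))) ∧
    (∀ x : K, x ≠ 0 →
      (fun z : K => x + (z - χ x • f z))^[p] = id ∧
      ∀ k : ℕ, 0 < k → k < p → (fun z : K => x + (z - χ x • f z))^[k] ≠ id) ∧
    Nat.card {g : K → K | ∃ x : K, g = fun z : K => x + (z - χ x • f z)} = p ^ m :=
  stmt17_general p m hp hodd F K hK f hf2 χ hker
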